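/- arXiv:1504.01759 — 2 statements merged into one kernel-verified Lean document; each statement's English description precedes it below -/
import Mathlib

section
/- Under the stated assumptions, for every z ∈ ℂ with |z| ≤ 1 one has 1 − ψ(1 − z) = Σ_{k≥1} c(ψ,k) z^k, where ψ denotes the holomorphic extension of ψ to the closed right half-plane, and the series converges absolutely. -/
open MeasureTheory Filter Topology

noncomputable section

/-- Coefficients `c(ψ,k)` of the Bernstein function `ψ` with drift `b` and Lévy measure `ν`:
`c(ψ,k) = (1/k!) ∫ s^k e^{-s} dν(s) + b·[k = 1]`. -/
def bernC (b : ℝ) (ν : Measure ℝ) (k : ℕ) : ℝ :=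
  ((k.factorial : ℝ))⁻¹ * ∫ s in Set.Ioi (0 : ℝ), s ^ k * Real.exp (-s) ∂ν
    + if k = 1 then b else 0

/-- One-step distribution of the discrete subordinator: mass `c k` at `k ≥ 1` and no mass at `0`. -/
def stepPMF (c : ℕ → ℝ) (k : ℕ) : ℝ := if k = 0 then 0 else c k

/-- `tauPMF c n k = P(τ_n = k)`, the `n`-fold convolution of the one-step distribution. -/
def tauPMF (c : ℕ → ℝ) : ℕ → ℕ → ℝ
  | 0, k => if k = 0 then 1 else 0
  | n + 1, k => ∑ j ∈ Finset.range (k + 1), tauPMF c n j * stepPMF c (k - j)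

/-- `cdfTau c n t = F_n(t) = P(τ_n ≤ t)`. -/
def cdfTau (c : ℕ → ℝ) (n : ℕ) (t : ℝ) : ℝ :=
  if t < 0 then 0 else ∑ k ∈ Finset.range (⌊t⌋₊ + 1), tauPMF c n k

/-- Holomorphic extension of the Bernstein function (with `a = 0`) to the closed right
half-plane: `ψ(z) = b z + ∫ (1 - e^{-z s}) dν(s)`. -/
def psiC (b : ℝ) (ν : MeasureTheory.Measure ℝ) (z : ℂ) : ℂ :=
  b * z + ∫ s in Set.Ioi (0 : ℝ), (1 - Complex.exp (-(z * (s : ℂ)))) ∂ν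

/-!
Write `1 - e^{-(1-z)s} = (1 - e^{-s}) - (e^{zs} - 1) e^{-s}` and expand `e^{zs} - 1` in powers of
`zs`. For `‖z‖ ≤ 1` and `s ≥ 0` the `k`-th term is dominated by `s^k e^{-s} / k!`, and these bounds sum
to `1 - e^{-s} ≤ min 1 s`, which is `ν`-integrable on `(0, ∞)`; dominated convergence therefore
allows termwise integration and produces the Lévy part of `c(ψ,k) z^k`. The normalisation
`ψ(1) = 1` evaluates `∫ (1 - e^{-s}) dν` as `1 - b`, and the drift supplies the remaining `b z`.
In `ℂ`, summability already implies absolute summability.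
-/

open Nat

theorem NormedSpace.hasSum_pow_succ_div_factorial {𝔸 : Type*} [NormedDivisionRing 𝔸]
    [NormedAlgebra ℚ 𝔸] [CompleteSpace 𝔸] (x : 𝔸) :
    HasSum (fun k : ℕ => x ^ (k + 1) / ((k + 1)! : 𝔸)) (NormedSpace.exp x - 1) := by
  simpa using (hasSum_nat_add_iff' 1).2 (NormedSpace.expSeries_div_hasSum_exp x)

theorem Real.one_sub_exp_neg_le_min_one (s : ℝ) : 1 - Real.exp (-s) ≤ min 1 s :=
  le_min (by linarith [Real.exp_pos (-s)]) (by linarith [Real.add_one_le_exp (-s)])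

theorem Real.hasSum_pow_succ_div_factorial_mul_exp_neg (s : ℝ) :
    HasSum (fun k : ℕ => s ^ (k + 1) / ((k + 1)! : ℝ) * Real.exp (-s)) (1 - Real.exp (-s)) := by
  have h := (NormedSpace.hasSum_pow_succ_div_factorial s).mul_right (Real.exp (-s))
  rwa [← Real.exp_eq_exp_ℝ, sub_mul, ← Real.exp_add, add_neg_cancel, Real.exp_zero, one_mul] at h

theorem Complex.hasSum_mul_pow_succ_div_factorial_mul_exp_neg (z : ℂ) (s : ℝ) :
    HasSum (fun k : ℕ => (z * s) ^ (k + 1) / ((k + 1)! : ℂ) * Real.exp (-s))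
      ((Complex.exp (z * s) - 1) * Real.exp (-s)) := by
  have h := NormedSpace.hasSum_pow_succ_div_factorial (𝔸 := ℂ) (z * s)
  rw [← Complex.exp_eq_exp_ℂ] at h
  exact h.mul_right _

theorem Complex.norm_mul_pow_succ_div_factorial_mul_exp_neg_le {z : ℂ} (hz : ‖z‖ ≤ 1) {s : ℝ}
    (hs : 0 ≤ s) (k : ℕ) :
    ‖(z * s) ^ (k + 1) / ((k + 1)! : ℂ) * Real.exp (-s)‖
      ≤ s ^ (k + 1) / ((k + 1)! : ℝ) * Real.exp (-s) := by
  rw [norm_mul, norm_div, norm_pow, norm_mul, Complex.norm_real, Complex.norm_natCast,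
    Real.norm_of_nonneg hs, Complex.norm_real, Real.norm_of_nonneg (Real.exp_pos _).le]
  gcongr
  exact mul_le_of_le_one_left hs hz

section LevyIntegrals

variable {μ : Measure ℝ}

theorem integrable_one_sub_exp_neg (h0 : ∀ᵐ s ∂μ, 0 ≤ s)
    (hμ : Integrable (fun s => min 1 s) μ) : Integrable (fun s => 1 - Real.exp (-s)) μ := by
  refine hμ.mono' (by fun_prop) (h0.mono fun s hs => ?_)
  rw [Real.norm_of_nonneg (by simpa using Real.exp_le_one_iff.mpr (neg_nonpos.mpr hs))]
  exact Real.one_sub_exp_neg_le_min_one s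

variable {z : ℂ}

theorem hasSum_integral_mul_pow_succ_div_factorial_mul_exp_neg (h0 : ∀ᵐ s ∂μ, 0 ≤ s)
    (hμ : Integrable (fun s => min 1 s) μ) (hz : ‖z‖ ≤ 1) :
    HasSum (fun k : ℕ => ∫ s, (z * s) ^ (k + 1) / ((k + 1)! : ℂ) * Real.exp (-s) ∂μ)
      (∫ s, (Complex.exp (z * s) - 1) * Real.exp (-s) ∂μ) := by
  refine hasSum_integral_of_dominated_convergence
    (fun k s => s ^ (k + 1) / ((k + 1)! : ℝ) * Real.exp (-s)) (fun k => by fun_prop)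
    (fun k => h0.mono fun s hs => Complex.norm_mul_pow_succ_div_factorial_mul_exp_neg_le hz hs k)
    (ae_of_all _ fun s => (Real.hasSum_pow_succ_div_factorial_mul_exp_neg s).summable) ?_
    (ae_of_all _ fun s => Complex.hasSum_mul_pow_succ_div_factorial_mul_exp_neg z s)
  simpa only [fun s => (Real.hasSum_pow_succ_div_factorial_mul_exp_neg s).tsum_eq]
    using integrable_one_sub_exp_neg h0 hμ

theorem integrable_cexp_sub_one_mul_exp_neg (h0 : ∀ᵐ s ∂μ, 0 ≤ s)
    (hμ : Integrable (fun s => min 1 s) μ) (hz : ‖z‖ ≤ 1) :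
    Integrable (fun s : ℝ => (Complex.exp (z * s) - 1) * Real.exp (-s)) μ := by
  refine (integrable_one_sub_exp_neg h0 hμ).mono' (by fun_prop) (h0.mono fun s hs => ?_)
  exact (Complex.hasSum_mul_pow_succ_div_factorial_mul_exp_neg z s).norm_le_of_bounded
    (Real.hasSum_pow_succ_div_factorial_mul_exp_neg s)
    (Complex.norm_mul_pow_succ_div_factorial_mul_exp_neg_le hz hs)

theorem integral_one_sub_cexp_neg_one_sub_mul (h0 : ∀ᵐ s ∂μ, 0 ≤ s)
    (hμ : Integrable (fun s => min 1 s) μ) (hz : ‖z‖ ≤ 1) :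
    ∫ s, (1 - Complex.exp (-((1 - z) * s))) ∂μ
      = ((∫ s, (1 - Real.exp (-s)) ∂μ : ℝ) : ℂ)
        - ∫ s, (Complex.exp (z * s) - 1) * Real.exp (-s) ∂μ := by
  have hsplit : ∀ s : ℝ, 1 - Complex.exp (-((1 - z) * s))
      = ((1 - Real.exp (-s) : ℝ) : ℂ) - (Complex.exp (z * s) - 1) * Real.exp (-s) := by
    intro s
    push_cast
    rw [show -((1 - z) * s) = z * s + -s by ring, Complex.exp_add]
    ring
  simp only [hsplit]
  rw [integral_sub ?_ (integrable_cexp_sub_one_mul_exp_neg h0 hμ hz), integral_complex_ofReal]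
  exact (integrable_one_sub_exp_neg h0 hμ).ofReal

theorem integral_mul_pow_succ_div_factorial_mul_exp_neg (z : ℂ) (k : ℕ) :
    ∫ s, (z * s) ^ (k + 1) / ((k + 1)! : ℂ) * Real.exp (-s) ∂μ
      = ((((k + 1)! : ℝ))⁻¹ * ∫ s, s ^ (k + 1) * Real.exp (-s) ∂μ : ℝ) * z ^ (k + 1) := by
  have hterm : ∀ s : ℝ, (z * s) ^ (k + 1) / ((k + 1)! : ℂ) * Real.exp (-s)
      = (z ^ (k + 1) * (((k + 1)! : ℂ))⁻¹) * ((s ^ (k + 1) * Real.exp (-s) : ℝ) : ℂ) := by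
    intro s
    push_cast
    ring
  simp only [hterm]
  rw [integral_const_mul, integral_complex_ofReal]
  push_cast
  ring

theorem hasSum_levy_coeff_mul_pow (h0 : ∀ᵐ s ∂μ, 0 ≤ s)
    (hμ : Integrable (fun s => min 1 s) μ) (hz : ‖z‖ ≤ 1) :
    HasSum (fun k : ℕ =>
        ((((k + 1)! : ℝ))⁻¹ * ∫ s, s ^ (k + 1) * Real.exp (-s) ∂μ : ℝ) * z ^ (k + 1))
      (((∫ s, (1 - Real.exp (-s)) ∂μ : ℝ) : ℂ) - ∫ s, (1 - Complex.exp (-((1 - z) * s))) ∂μ) := by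
  rw [integral_one_sub_cexp_neg_one_sub_mul h0 hμ hz, sub_sub_cancel]
  simpa only [integral_mul_pow_succ_div_factorial_mul_exp_neg]
    using hasSum_integral_mul_pow_succ_div_factorial_mul_exp_neg h0 hμ hz

end LevyIntegrals

theorem one_sub_psi_power_series_general
    (b : ℝ) (ν : Measure ℝ)
    (hνfin : IntegrableOn (fun s => min 1 s) (Set.Ioi (0 : ℝ)) ν)
    (ψ : ℝ → ℝ)
    (hψ : ∀ x : ℝ, 0 ≤ x →
      ψ x = b * x + ∫ s in Set.Ioi (0 : ℝ), (1 - Real.exp (-(x * s))) ∂ν)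
    (hψ1 : ψ 1 = 1)
    (z : ℂ) (hz : ‖z‖ ≤ 1) :
    HasSum (fun k : ℕ => (bernC b ν (k + 1) : ℂ) * z ^ (k + 1))
        (1 - psiC b ν (1 - z)) ∧
      Summable (fun k : ℕ => ‖(bernC b ν (k + 1) : ℂ) * z ^ (k + 1)‖) := by
  have hpos : ∀ᵐ s ∂ν.restrict (Set.Ioi 0), (0 : ℝ) ≤ s :=
    (ae_restrict_mem measurableSet_Ioi).mono fun _ hs => le_of_lt hs
  have hlevy := hasSum_levy_coeff_mul_pow hpos hνfin hz
  have hone : ∫ s in Set.Ioi (0 : ℝ), (1 - Real.exp (-s)) ∂ν = 1 - b := by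
    have h := hψ 1 zero_le_one
    simp only [one_mul, mul_one, hψ1] at h
    linarith
  have hsum : HasSum (fun k : ℕ => (bernC b ν (k + 1) : ℂ) * z ^ (k + 1))
      (1 - psiC b ν (1 - z)) := by
    convert hlevy.add (hasSum_ite_eq 0 ((b : ℂ) * z)) using 1
    · funext k
      rcases k with _ | k
      · simp only [bernC, zero_add, factorial_one, cast_one, inv_one, pow_one, one_mul,
          ↓reduceIte, Complex.ofReal_add]
        ring
      · simp [bernC]
    · rw [psiC, hone]
      push_cast
      ring
  exact ⟨hsum, summable_norm_iff.mpr hsum.summable⟩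

/-- The power-series identity `1 - ψ(1 - z) = Σ_{k ≥ 1} c(ψ,k) z^k` for `|z| ≤ 1`,
with absolute convergence of the series. -/
theorem one_sub_psi_power_series
    (α : ℝ) (hα0 : 0 < α) (hα2 : α < 2)
    (b : ℝ) (hb : 0 ≤ b) (ν : Measure ℝ)
    (hνfin : IntegrableOn (fun s => min 1 s) (Set.Ioi (0 : ℝ)) ν)
    (ψ : ℝ → ℝ)
    (hψ : ∀ x : ℝ, 0 ≤ x →
      ψ x = b * x + ∫ s in Set.Ioi (0 : ℝ), (1 - Real.exp (-(x * s))) ∂ν)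
    (hψ0 : ψ 0 = 0) (hψ1 : ψ 1 = 1)
    (z : ℂ) (hz : ‖z‖ ≤ 1) :
    HasSum (fun k : ℕ => (bernC b ν (k + 1) : ℂ) * z ^ (k + 1))
        (1 - psiC b ν (1 - z)) ∧
      Summable (fun k : ℕ => ‖(bernC b ν (k + 1) : ℂ) * z ^ (k + 1)‖) :=
  one_sub_psi_power_series_general b ν hνfin ψ hψ hψ1 z hz
end
end

section
/- Let ψ be a Bernstein function with representation ψ(x) = a + b·x + ∫ (1 − e^{−x s}) dν(s), extended to the closed right half-plane by the same formula. Then for every u > 0 and every z ∈ ℂ with Re z ≥ 0, |ψ(u(1+z)) − ψ(u)| ≤ |z| · ψ(u). (Lemma 4.5 of the paper.) -/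
/-! Write `e^{-us} - e^{-u(1+z)s} = e^{-us} (1 - e^{-uzs})`. Since `exp` is 1-Lipschitz on the
left half-plane, this has modulus at most `|z|·us·e^{-us} ≤ |z| (1 - e^{-us})`, the last step
being `1 + t ≤ e^t`. Integrating against `ν` and adding the linear term `b·u·z` gives at most
`|z| (b u + ∫ (1 - e^{-us}) dν) ≤ |z| ψ(u)`. -/

open MeasureTheory Filter Topology

noncomputable section

/-- Holomorphic extension of a Bernstein function `ψ(x) = a + b x + ∫ (1 - e^{-x s}) dν(s)`
to the closed right half-plane. -/
def psiCA (a b : ℝ) (ν : Measure ℝ) (z : ℂ) : ℂ :=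
  a + b * z + ∫ s in Set.Ioi (0 : ℝ), (1 - Complex.exp (-(z * (s : ℂ)))) ∂ν

theorem Complex.norm_one_sub_exp_neg_le {w : ℂ} (hw : 0 ≤ w.re) :
    ‖1 - exp (-w)‖ ≤ ‖w‖ := by
  have hmem : -w ∈ {c : ℂ | c.re ≤ 0} := by simpa using hw
  have hzero : (0 : ℂ) ∈ {c : ℂ | c.re ≤ 0} := by simp
  simpa [norm_sub_rev] using
    (convex_halfSpace_re_le 0).norm_image_sub_le_of_norm_hasDerivWithin_le (C := 1)
      (fun c _ => (hasDerivAt_exp c).hasDerivWithinAt)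
      (fun c hc => by simpa [norm_exp] using hc) hzero hmem

theorem Real.mul_exp_neg_le_one_sub_exp_neg (t : ℝ) : t * exp (-t) ≤ 1 - exp (-t) := by
  have h : (t + 1) * exp (-t) ≤ exp t * exp (-t) := by gcongr; exact add_one_le_exp t
  rw [← exp_add, add_neg_cancel, exp_zero] at h
  linarith

theorem Complex.norm_one_sub_exp_neg_le_two {w : ℂ} (hw : 0 ≤ w.re) : ‖1 - exp (-w)‖ ≤ 2 := by
  calc ‖1 - exp (-w)‖ ≤ ‖(1 : ℂ)‖ + ‖exp (-w)‖ := norm_sub_le _ _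
    _ ≤ 1 + 1 := by
      gcongr
      · simp
      · simpa [norm_exp] using hw
    _ = 2 := by norm_num

theorem Complex.norm_exp_neg_sub_exp_neg_mul_le {x : ℝ} (hx : 0 ≤ x) {z : ℂ} (hz : 0 ≤ z.re) :
    ‖exp (-x) - exp (-(x * (1 + z)))‖ ≤ ‖z‖ * (1 - Real.exp (-x)) := by
  have hfactor : exp (-x) - exp (-(x * (1 + z))) = exp (-x) * (1 - exp (-(x * z))) := by
    rw [mul_sub, mul_one, ← exp_add]
    congr 2
    ring
  have hxz : ‖1 - exp (-(x * z))‖ ≤ x * ‖z‖ := by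
    simpa [abs_of_nonneg hx] using
      norm_one_sub_exp_neg_le (w := x * z) (by simpa using mul_nonneg hx hz)
  calc ‖exp (-x) - exp (-(x * (1 + z)))‖ = Real.exp (-x) * ‖1 - exp (-(x * z))‖ := by
        rw [hfactor, norm_mul, ← ofReal_neg, norm_exp_ofReal]
    _ ≤ Real.exp (-x) * (x * ‖z‖) := by gcongr
    _ = ‖z‖ * (x * Real.exp (-x)) := by ring
    _ ≤ ‖z‖ * (1 - Real.exp (-x)) := by gcongr; exact Real.mul_exp_neg_le_one_sub_exp_neg x

theorem integrableOn_one_sub_cexp_neg_mul {ν : Measure ℝ}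
    (hν : IntegrableOn (fun s => min 1 s) (Set.Ioi 0) ν) {c : ℂ} (hc : 0 ≤ c.re) :
    IntegrableOn (fun s : ℝ => 1 - Complex.exp (-(c * s))) (Set.Ioi 0) ν := by
  refine (hν.const_mul (max 2 ‖c‖)).mono' (by fun_prop) ?_
  filter_upwards [ae_restrict_mem measurableSet_Ioi] with s (hs : 0 < s)
  have hcs : 0 ≤ (c * s).re := by simpa using mul_nonneg hc hs.le
  rcases le_total s 1 with h | h
  · rw [min_eq_right h]
    calc ‖1 - Complex.exp (-(c * s))‖ ≤ ‖c‖ * s := by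
          simpa [abs_of_pos hs] using Complex.norm_one_sub_exp_neg_le hcs
      _ ≤ max 2 ‖c‖ * s := by gcongr; exact le_max_right _ _
  · rw [min_eq_left h, mul_one]
    exact (Complex.norm_one_sub_exp_neg_le_two hcs).trans (le_max_left _ _)

theorem integrableOn_one_sub_exp_neg_mul {ν : Measure ℝ}
    (hν : IntegrableOn (fun s => min 1 s) (Set.Ioi 0) ν) {u : ℝ} (hu : 0 ≤ u) :
    IntegrableOn (fun s : ℝ => 1 - Real.exp (-(u * s))) (Set.Ioi 0) ν := by
  refine (integrableOn_one_sub_cexp_neg_mul hν (c := u) (by simpa using hu)).re.congr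
    (Eventually.of_forall fun s => ?_)
  dsimp only
  rw [RCLike.re_to_complex, ← Complex.ofReal_mul, ← Complex.ofReal_neg, Complex.sub_re,
    Complex.one_re, Complex.exp_ofReal_re]

theorem norm_setIntegral_cexp_neg_sub_le {ν : Measure ℝ}
    (hν : IntegrableOn (fun s => min 1 s) (Set.Ioi 0) ν) {u : ℝ} (hu : 0 ≤ u) {z : ℂ}
    (hz : 0 ≤ z.re) :
    ‖∫ s in Set.Ioi 0, (Complex.exp (-(u * s)) - Complex.exp (-(u * (1 + z) * s))) ∂ν‖ ≤
      ‖z‖ * ∫ s in Set.Ioi 0, (1 - Real.exp (-(u * s))) ∂ν := by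
  rw [← integral_const_mul]
  refine norm_integral_le_of_norm_le ((integrableOn_one_sub_exp_neg_mul hν hu).const_mul _) ?_
  filter_upwards [ae_restrict_mem measurableSet_Ioi] with s (hs : 0 < s)
  have := Complex.norm_exp_neg_sub_exp_neg_mul_le (x := u * s) (by positivity) hz
  push_cast at this
  rwa [show (u : ℂ) * (1 + z) * s = u * s * (1 + z) by ring]

theorem psiCA_sub_psiCA (a b : ℝ) {ν : Measure ℝ}
    (hν : IntegrableOn (fun s => min 1 s) (Set.Ioi 0) ν) {w₁ w₂ : ℂ} (h₁ : 0 ≤ w₁.re)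
    (h₂ : 0 ≤ w₂.re) :
    psiCA a b ν w₁ - psiCA a b ν w₂ =
      b * (w₁ - w₂) +
        ∫ s in Set.Ioi 0, (Complex.exp (-(w₂ * s)) - Complex.exp (-(w₁ * s))) ∂ν := by
  rw [psiCA, psiCA, add_sub_add_comm, ← integral_sub (integrableOn_one_sub_cexp_neg_mul hν h₁)
    (integrableOn_one_sub_cexp_neg_mul hν h₂)]
  simp only [sub_sub_sub_cancel_left]
  ring

/-- Lemma 4.5: for `u > 0` and `Re z ≥ 0`, `|ψ(u(1+z)) - ψ(u)| ≤ |z| ψ(u)`. -/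
theorem bernstein_perturbation_bound
    (a b : ℝ) (ha : 0 ≤ a) (hb : 0 ≤ b) (ν : Measure ℝ)
    (hνfin : IntegrableOn (fun s => min 1 s) (Set.Ioi (0 : ℝ)) ν)
    (ψ : ℝ → ℝ)
    (hψ : ∀ x : ℝ, 0 ≤ x →
      ψ x = a + b * x + ∫ s in Set.Ioi (0 : ℝ), (1 - Real.exp (-(x * s))) ∂ν)
    (u : ℝ) (hu : 0 < u) (z : ℂ) (hz : 0 ≤ z.re) :
    ‖psiCA a b ν (u * (1 + z)) - psiCA a b ν u‖ ≤ ‖z‖ * ψ u := by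
  set J := ∫ s in Set.Ioi (0 : ℝ), (1 - Real.exp (-(u * s))) ∂ν
  have hre : 0 ≤ ((u : ℂ) * (1 + z)).re := by simpa using mul_nonneg hu.le (by linarith)
  have hlinear : ‖(b : ℂ) * (u * (1 + z) - u)‖ = ‖z‖ * (b * u) := by
    rw [show (u : ℂ) * (1 + z) - u = u * z by ring, norm_mul, norm_mul, Complex.norm_real,
      Complex.norm_real, Real.norm_of_nonneg hb, Real.norm_of_nonneg hu.le]
    ring
  rw [psiCA_sub_psiCA a b hνfin hre (by simpa using hu.le), hψ u hu.le]
  calc _ ≤ ‖z‖ * (b * u) + ‖z‖ * J := (norm_add_le _ _).trans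
        (add_le_add hlinear.le (norm_setIntegral_cexp_neg_sub_le hνfin hu.le hz))
    _ ≤ ‖z‖ * (a + b * u + J) := by
        rw [← mul_add]
        gcongr
        linarith
end
end
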